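/- arXiv:2411.13985 — 2 statements merged into one kernel-verified Lean document; each statement's English description precedes it below -/
import Mathlib

section
/- In every segment representation (α, β) of the Pappus gadget, the three anchor points α(p7), α(p8), α(p9) are collinear. -/
set_option maxRecDepth 8000

abbrev Pt : Type := ℝ × ℝ

def IsLine (L : Set Pt) : Prop :=
  ∃ a b : Pt, a ≠ b ∧ L = (affineSpan ℝ {a, b} : Set Pt)

def IsSegment (S : Set Pt) : Prop :=
  ∃ a b : Pt, a ≠ b ∧ S = segment ℝ a b

structure Hypergraph' (ι : Type) where
  V : Finset ι
  E : Finset (Finset ι)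
  edge_nonempty : ∀ e ∈ E, e.Nonempty
  edge_subset : ∀ e ∈ E, e ⊆ V

structure LineRep {ι : Type} (H : Hypergraph' ι) where
  α : ι → Pt
  β : Finset ι → Set Pt
  α_inj : Set.InjOn α ↑H.V
  β_inj : Set.InjOn β ↑H.E
  β_isLine : ∀ e ∈ H.E, IsLine (β e)
  incidence : ∀ v ∈ H.V, ∀ e ∈ H.E, (v ∈ e ↔ α v ∈ β e)

structure SegmentRep {ι : Type} (H : Hypergraph' ι) where
  α : ι → Pt
  β : Finset ι → Set Pt
  α_inj : Set.InjOn α ↑H.V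
  β_inj : Set.InjOn β ↑H.E
  β_isSegment : ∀ e ∈ H.E, IsSegment (β e)
  incidence : ∀ v ∈ H.V, ∀ e ∈ H.E, (v ∈ e ↔ α v ∈ β e)

def SegmentRep.Strict {ι : Type} {H : Hypergraph' ι} (R : SegmentRep H) : Prop :=
  ∀ e ∈ H.E, ∀ e' ∈ H.E, e ≠ e' → (R.β e ∩ R.β e').Subsingleton

def LineRep.CrossingFree {ι : Type} {H : Hypergraph' ι} (R : LineRep H) : Prop :=
  ∀ e ∈ H.E, ∀ e' ∈ H.E, ((R.β e ∩ R.β e').Nonempty ↔ ∃ v, v ∈ e ∧ v ∈ e')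

def SegmentRep.CrossingFree {ι : Type} {H : Hypergraph' ι} (R : SegmentRep H) : Prop :=
  ∀ e ∈ H.E, ∀ e' ∈ H.E, ((R.β e ∩ R.β e').Nonempty ↔ ∃ v, v ∈ e ∧ v ∈ e')

def pappusE : Finset (Finset (Fin 9)) :=
  {({0, 1, 2} : Finset (Fin 9)), {3, 4, 5}, {0, 3, 7}, {0, 4, 8},
    {1, 3, 6}, {1, 5, 8}, {2, 4, 6}, {2, 5, 7}}

/-- The Pappus gadget: vertex `i : Fin 9` stands for `p(i+1)`;
the anchors `p7, p8, p9` are the vertices `6, 7, 8`. -/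
def pappus : Hypergraph' (Fin 9) where
  V := Finset.univ
  E := pappusE
  edge_nonempty := by decide
  edge_subset := by decide

/-! Each hyperedge of a segment representation lies on a segment, so the nine points form a
Pappus configuration and the claim is Pappus's hexagon theorem. If the six fixers are collinear,
every anchor lies on their line. Otherwise no two lines meeting at an anchor are parallel: parallel
lines through a common point coincide, which would put all six fixers on one line. Each anchor is
then given by Cramer's rule, and in the resulting homogeneous coordinates, with `p1` at the origin
and `p3`, `p6` parametrised along their lines, the collinearity determinant of the anchors vanishes
identically. -/

namespace Pt

def cross (u v : Pt) : ℝ := u.1 * v.2 - u.2 * v.1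

lemma cross_self (u : Pt) : cross u u = 0 := by
  simp only [cross]; ring

lemma exists_eq_smul_of_cross_eq_zero {u v : Pt} (hu : u ≠ 0) (h : cross u v = 0) :
    ∃ r : ℝ, v = r • u := by
  simp only [cross] at h
  by_cases h₁ : u.1 = 0
  · have h₂ : u.2 ≠ 0 := fun h₂ => hu (Prod.ext h₁ h₂)
    refine ⟨v.2 / u.2, Prod.ext ?_ ?_⟩
    · have hv₁ : u.2 * v.1 = 0 := by linear_combination -h + v.2 * h₁
      simpa [h₁, h₂] using hv₁
    · simp [h₂]
  · refine ⟨v.1 / u.1, Prod.ext ?_ ?_⟩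
    · simp [h₁]
    · simp only [Prod.smul_snd, smul_eq_mul]
      field_simp
      linear_combination h

lemma collinear_of_forall_cross_eq_zero {s : Set Pt} (o : Pt) {u : Pt} (hu : u ≠ 0)
    (h : ∀ x ∈ s, cross u (x - o) = 0) : Collinear ℝ s := by
  refine (collinear_iff_exists_forall_eq_smul_vadd s).2 ⟨o, u, fun x hx => ?_⟩
  obtain ⟨r, hr⟩ := exists_eq_smul_of_cross_eq_zero hu (h x hx)
  exact ⟨r, by rw [vadd_eq_add, ← hr, sub_add_cancel]⟩

lemma collinear_iff_cross_eq_zero {a b c : Pt} :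
    Collinear ℝ {a, b, c} ↔ cross (b - a) (c - a) = 0 := by
  constructor
  · intro h
    obtain ⟨v, hv⟩ := (collinear_iff_of_mem (Set.mem_insert a _)).1 h
    obtain ⟨r, rfl⟩ := hv b (by simp)
    obtain ⟨s, rfl⟩ := hv c (by simp)
    simp only [vadd_eq_add, add_sub_cancel_right, cross, Prod.smul_fst, Prod.smul_snd,
      smul_eq_mul]
    ring
  · intro h
    rcases eq_or_ne a b with rfl | hab
    · simpa using collinear_pair ℝ a c
    refine collinear_of_forall_cross_eq_zero a (sub_ne_zero.2 hab.symm) fun x hx => ?_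
    simp only [Set.mem_insert_iff, Set.mem_singleton_iff] at hx
    rcases hx with rfl | rfl | rfl
    · simp [cross]
    · exact cross_self _
    · exact h

lemma cross_sub_sub_rotate (a b c : Pt) : cross (b - a) (c - a) = cross (c - b) (a - b) := by
  simp only [cross, Prod.fst_sub, Prod.snd_sub]
  ring

lemma cross_eq_zero_of_collinear {a b c : Pt} (h : Collinear ℝ {a, b, c}) :
    cross (c - b) (a - b) = 0 := by
  rw [← cross_sub_sub_rotate]
  exact collinear_iff_cross_eq_zero.1 h

lemma cross_eq_zero_of_cross_eq_zero {u v w : Pt} (hw : w ≠ 0) (hu : cross w u = 0)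
    (hv : cross w v = 0) : cross u v = 0 := by
  obtain ⟨r, rfl⟩ := exists_eq_smul_of_cross_eq_zero hw hu
  obtain ⟨s, rfl⟩ := exists_eq_smul_of_cross_eq_zero hw hv
  simp only [cross, Prod.smul_fst, Prod.smul_snd, smul_eq_mul]
  ring

lemma cross_smul_eq_of_mem_lines {a u a' u' x : Pt} (hx : cross u (x - a) = 0)
    (hx' : cross u' (x - a') = 0) :
    cross u u' • x = cross u u' • a + cross (a' - a) u' • u := by
  simp only [cross, Prod.fst_sub, Prod.snd_sub] at hx hx'
  refine Prod.ext ?_ ?_ <;>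
    simp only [cross, Prod.fst_add, Prod.snd_add, Prod.fst_sub, Prod.snd_sub, Prod.smul_fst,
      Prod.smul_snd, smul_eq_mul]
  · linear_combination (u'.1 : ℝ) * hx - (u.1 : ℝ) * hx'
  · linear_combination (u'.2 : ℝ) * hx - (u.2 : ℝ) * hx'

-- The right side is the 3 × 3 determinant of the homogeneous coordinates `(Xᵢ : Dᵢ)`.
lemma mul_mul_mul_cross_sub_eq {D₁ D₂ D₃ : ℝ} {x₁ x₂ x₃ X₁ X₂ X₃ : Pt}
    (h₁ : D₁ • x₁ = X₁) (h₂ : D₂ • x₂ = X₂) (h₃ : D₃ • x₃ = X₃) :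
    D₁ * D₂ * D₃ * cross (x₂ - x₁) (x₃ - x₁) =
      D₃ * cross X₁ X₂ + D₁ * cross X₂ X₃ + D₂ * cross X₃ X₁ := by
  subst h₁ h₂ h₃
  simp only [cross, Prod.fst_sub, Prod.snd_sub, Prod.smul_fst, Prod.smul_snd, smul_eq_mul]
  ring

lemma pappus_mul_cross_eq_zero {a₁ a₂ b₀ b₁ b₂ p q r : Pt} {s t : ℝ} (ha₂ : a₂ = t • a₁)
    (hb₂ : b₂ - b₀ = s • (b₁ - b₀))
    (hp₁ : cross (b₀ - a₁) (p - a₁) = 0) (hp₂ : cross (b₁ - a₂) (p - a₂) = 0)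
    (hq₁ : cross b₀ q = 0) (hq₂ : cross (b₂ - a₂) (q - a₂) = 0)
    (hr₁ : cross b₁ r = 0) (hr₂ : cross (b₂ - a₁) (r - a₁) = 0) :
    cross (b₀ - a₁) (b₁ - a₂) * cross b₀ (b₂ - a₂) * cross b₁ (b₂ - a₁) *
      cross (q - p) (r - p) = 0 := by
  subst ha₂
  obtain rfl := eq_add_of_sub_eq hb₂
  rw [mul_mul_mul_cross_sub_eq (cross_smul_eq_of_mem_lines hp₁ hp₂)
    (cross_smul_eq_of_mem_lines (a := 0) (by simpa using hq₁) hq₂)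
    (cross_smul_eq_of_mem_lines (a := 0) (by simpa using hr₁) hr₂)]
  simp only [cross, Prod.fst_add, Prod.snd_add, Prod.fst_sub, Prod.snd_sub, Prod.smul_fst,
    Prod.smul_snd, Prod.fst_zero, Prod.snd_zero, smul_eq_mul]
  ring

lemma pappus_hexagon_of_cross_ne_zero {a₀ a₁ a₂ b₀ b₁ b₂ p q r : Pt} (ha₀₁ : a₀ ≠ a₁)
    (hb₀₁ : b₀ ≠ b₁) (ha : Collinear ℝ {a₀, a₁, a₂}) (hb : Collinear ℝ {b₀, b₁, b₂})
    (hp₁ : Collinear ℝ {p, a₁, b₀}) (hp₂ : Collinear ℝ {p, a₂, b₁})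
    (hq₁ : Collinear ℝ {q, a₀, b₀}) (hq₂ : Collinear ℝ {q, a₂, b₂})
    (hr₁ : Collinear ℝ {r, a₀, b₁}) (hr₂ : Collinear ℝ {r, a₁, b₂})
    (hp : cross (b₀ - a₁) (b₁ - a₂) ≠ 0) (hq : cross (b₀ - a₀) (b₂ - a₂) ≠ 0)
    (hr : cross (b₁ - a₀) (b₂ - a₁) ≠ 0) :
    Collinear ℝ {p, q, r} := by
  obtain ⟨t, ht⟩ := exists_eq_smul_of_cross_eq_zero (sub_ne_zero.2 ha₀₁.symm)
    (collinear_iff_cross_eq_zero.1 ha)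
  obtain ⟨s, hs⟩ := exists_eq_smul_of_cross_eq_zero (sub_ne_zero.2 hb₀₁.symm)
    (collinear_iff_cross_eq_zero.1 hb)
  have hline {x y z : Pt} (h : Collinear ℝ {x, y, z}) :
      cross ((z - a₀) - (y - a₀)) ((x - a₀) - (y - a₀)) = 0 := by
    simpa only [sub_sub_sub_cancel_right] using cross_eq_zero_of_collinear h
  have key := pappus_mul_cross_eq_zero (a₁ := a₁ - a₀) (a₂ := a₂ - a₀) (b₀ := b₀ - a₀)
    (b₁ := b₁ - a₀) (b₂ := b₂ - a₀) (p := p - a₀) (q := q - a₀) (r := r - a₀) ht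
    (by simpa only [sub_sub_sub_cancel_right] using hs) (hline hp₁) (hline hp₂)
    (cross_eq_zero_of_collinear hq₁) (hline hq₂) (cross_eq_zero_of_collinear hr₁) (hline hr₂)
  simp only [sub_sub_sub_cancel_right] at key
  rw [collinear_iff_cross_eq_zero]
  exact (mul_eq_zero.1 key).resolve_left (mul_ne_zero (mul_ne_zero hp hq) hr)

lemma collinear_insert_insert_of_cross_eq_zero {a b c d p : Pt} (hab : a ≠ b) (hcd : c ≠ d)
    (hpar : cross (b - a) (d - c) = 0) (hp : Collinear ℝ {p, a, b})
    (hp' : Collinear ℝ {p, c, d}) : Collinear ℝ {a, b, c, d} := by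
  have hpa := cross_eq_zero_of_collinear hp
  have hpc : cross (b - a) (p - c) = 0 :=
    cross_eq_zero_of_cross_eq_zero (sub_ne_zero.2 hcd.symm)
      (by unfold cross at hpar ⊢; linarith) (cross_eq_zero_of_collinear hp')
  refine collinear_of_forall_cross_eq_zero a (sub_ne_zero.2 hab.symm) fun x hx => ?_
  simp only [Set.mem_insert_iff, Set.mem_singleton_iff] at hx
  simp only [cross, Prod.fst_sub, Prod.snd_sub] at hpar hpa hpc ⊢
  rcases hx with rfl | rfl | rfl | rfl
  · ring
  · ring
  · linear_combination hpa - hpc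
  · linear_combination hpar + hpa - hpc

lemma collinear_hexagon_of_cross_eq_zero {a a' a'' b b' b'' p : Pt} (haa' : a ≠ a')
    (hbb' : b ≠ b') (hab : a ≠ b) (hab' : a' ≠ b') (ha : Collinear ℝ {a'', a, a'})
    (hb : Collinear ℝ {b'', b, b'}) (hpar : cross (b - a) (b' - a') = 0)
    (hp : Collinear ℝ {p, a, b}) (hp' : Collinear ℝ {p, a', b'}) :
    Collinear ℝ {a'', b'', a, b, a', b'} := by
  have h := collinear_insert_insert_of_cross_eq_zero hab hab' hpar hp hp'
  have h' := (h.collinear_insert_iff_of_ne (by simp) (by simp) hbb').2 hb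
  exact (h'.collinear_insert_iff_of_ne (by simp) (by simp) haa').2 ha

theorem pappus_hexagon {a₀ a₁ a₂ b₀ b₁ b₂ p q r : Pt}
    (ha₀₁ : a₀ ≠ a₁) (ha₀₂ : a₀ ≠ a₂) (ha₁₂ : a₁ ≠ a₂)
    (hb₀₁ : b₀ ≠ b₁) (hb₀₂ : b₀ ≠ b₂) (hb₁₂ : b₁ ≠ b₂)
    (h₀₀ : a₀ ≠ b₀) (h₀₁ : a₀ ≠ b₁) (h₁₀ : a₁ ≠ b₀) (h₁₂ : a₁ ≠ b₂) (h₂₁ : a₂ ≠ b₁)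
    (h₂₂ : a₂ ≠ b₂) (ha : Collinear ℝ {a₀, a₁, a₂}) (hb : Collinear ℝ {b₀, b₁, b₂})
    (hp₁ : Collinear ℝ {p, a₁, b₀}) (hp₂ : Collinear ℝ {p, a₂, b₁})
    (hq₁ : Collinear ℝ {q, a₀, b₀}) (hq₂ : Collinear ℝ {q, a₂, b₂})
    (hr₁ : Collinear ℝ {r, a₀, b₁}) (hr₂ : Collinear ℝ {r, a₁, b₂}) :
    Collinear ℝ {p, q, r} := by
  by_cases hS : Collinear ℝ {a₀, a₁, a₂, b₀, b₁, b₂}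
  · have hp := (hS.collinear_insert_iff_of_ne (by simp) (by simp) h₁₀).2 hp₁
    have hq := (hp.collinear_insert_iff_of_ne (by simp) (by simp) h₀₀).2 hq₁
    have hr := (hq.collinear_insert_iff_of_ne (by simp) (by simp) h₀₁).2 hr₁
    exact hr.subset (by simp [Set.insert_subset_iff])
  have hp : cross (b₀ - a₁) (b₁ - a₂) ≠ 0 := fun hpar => hS <|
    (collinear_hexagon_of_cross_eq_zero (b'' := b₂) ha₁₂ hb₀₁ h₁₀ h₂₁ ha
      (hb.subset (by simp [Set.insert_subset_iff])) hpar hp₁ hp₂).subset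
      (by simp [Set.insert_subset_iff])
  have hq : cross (b₀ - a₀) (b₂ - a₂) ≠ 0 := fun hpar => hS <|
    (collinear_hexagon_of_cross_eq_zero (a'' := a₁) (b'' := b₁) ha₀₂ hb₀₂ h₀₀ h₂₂
      (ha.subset (by simp [Set.insert_subset_iff])) (hb.subset (by simp [Set.insert_subset_iff]))
      hpar hq₁ hq₂).subset (by simp [Set.insert_subset_iff])
  have hr : cross (b₁ - a₀) (b₂ - a₁) ≠ 0 := fun hpar => hS <|
    (collinear_hexagon_of_cross_eq_zero (a'' := a₂) ha₀₁ hb₁₂ h₀₁ h₁₂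
      (ha.subset (by simp [Set.insert_subset_iff])) hb hpar hr₁ hr₂).subset
      (by simp [Set.insert_subset_iff])
  exact pappus_hexagon_of_cross_ne_zero ha₀₁ hb₀₁ ha hb hp₁ hp₂ hq₁ hq₂ hr₁ hr₂ hp hq hr

end Pt

lemma SegmentRep.collinear_of_mem {ι : Type} {H : Hypergraph' ι} (R : SegmentRep H)
    {e : Finset ι} (he : e ∈ H.E) {u v w : ι} (hu : u ∈ e) (hv : v ∈ e) (hw : w ∈ e) :
    Collinear ℝ {R.α u, R.α v, R.α w} := by
  obtain ⟨x, y, -, hxy⟩ := R.β_isSegment e he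
  have hmem {z : ι} (hz : z ∈ e) : R.α z ∈ line[ℝ, x, y] := by
    have h := (R.incidence z (H.edge_subset e he hz) e he).1 hz
    rw [hxy] at h
    exact (mem_segment_iff_wbtw.1 h).mem_affineSpan
  exact collinear_triple_of_mem_affineSpan_pair (hmem hu) (hmem hv) (hmem hw)

theorem stmt2 (R : SegmentRep pappus) :
    Collinear ℝ {R.α 6, R.α 7, R.α 8} := by
  have hinj : Function.Injective R.α := fun i j h =>
    R.α_inj (by simp [pappus]) (by simp [pappus]) h
  have hne (i j : Fin 9) (hij : i ≠ j := by decide) : R.α i ≠ R.α j := hinj.ne hij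
  have hcol (u v w : Fin 9) (he : {u, v, w} ∈ pappus.E := by decide) :
      Collinear ℝ {R.α u, R.α v, R.α w} :=
    R.collinear_of_mem he (by simp) (by simp) (by simp)
  exact Pt.pappus_hexagon (hne 0 1) (hne 0 2) (hne 1 2) (hne 3 4) (hne 3 5) (hne 4 5)
    (hne 0 3) (hne 0 4) (hne 1 3) (hne 1 5) (hne 2 4) (hne 2 5) (hcol 0 1 2) (hcol 3 4 5)
    (hcol 6 1 3) (hcol 6 2 4) (hcol 7 0 3) (hcol 7 2 5) (hcol 8 0 4) (hcol 8 1 5)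
end

section
/- Every hypergraph of rank at most 2 has a line representation. -/
set_option maxRecDepth 8000

/-!
Put the vertices on the parabola `y = x²` at distinct abscissae. The line `y = (a + b) x - a b`
meets the parabola exactly at the abscissae `a` and `b` (it is the tangent when `a = b`), so every
edge with one or two vertices is cut out of the vertex set by such a line.
-/

def parabolaChord (a b : ℝ) : Set Pt := {p | p.2 = (a + b) * p.1 - a * b}

lemma isLine_parabolaChord (a b : ℝ) : IsLine (parabolaChord a b) := by
  refine ⟨(0, -(a * b)), (1, a + b - a * b), by simp [Prod.ext_iff], ?_⟩
  ext p
  rw [SetLike.mem_coe, ← vsub_vadd p (0, -(a * b)), vadd_left_mem_affineSpan_pair]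
  simp only [parabolaChord, Set.mem_ofPred_eq, Prod.ext_iff, vsub_eq_sub, vadd_eq_add,
    Prod.fst_add, Prod.snd_add, Prod.smul_fst, Prod.smul_snd, Prod.fst_sub, Prod.snd_sub, smul_eq_mul]
  constructor
  · intro h
    exact ⟨p.1, by ring, by linear_combination -h⟩
  · rintro ⟨r, h1, h2⟩
    linear_combination (a + b) * h1 - h2

lemma mk_sq_mem_parabolaChord {a b c : ℝ} :
    ((c, c ^ 2) : Pt) ∈ parabolaChord a b ↔ c = a ∨ c = b := by
  have : c ^ 2 - ((a + b) * c - a * b) = (c - a) * (c - b) := by ring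
  simp only [parabolaChord, Set.mem_ofPred_eq, ← sub_eq_zero (a := c ^ 2), this, mul_eq_zero,
    sub_eq_zero]

lemma Finset.exists_eq_pair_of_card_le_two {α : Type*} [DecidableEq α] {s : Finset α}
    (hs : s.Nonempty) (h : s.card ≤ 2) : ∃ a b, s = {a, b} := by
  have := hs.card_pos
  interval_cases hc : s.card
  · obtain ⟨a, rfl⟩ := Finset.card_eq_one.mp hc
    exact ⟨a, a, by simp⟩
  · obtain ⟨a, b, -, rfl⟩ := Finset.card_eq_two.mp hc
    exact ⟨a, b, rfl⟩

lemma Set.Countable.exists_injOn_real {ι : Type*} {s : Set ι} (hs : s.Countable) :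
    ∃ t : ι → ℝ, s.InjOn t := by
  obtain ⟨f, hf⟩ := Set.countable_iff_exists_injOn.mp hs
  exact ⟨fun i => f i, Nat.cast_injective.comp_injOn hf⟩

lemma Hypergraph'.injOn_of_incidence {ι : Type} (H : Hypergraph' ι) {α : ι → Pt}
    {β : Finset ι → Set Pt} (hβ : ∀ v ∈ H.V, ∀ e ∈ H.E, (v ∈ e ↔ α v ∈ β e)) :
    Set.InjOn β H.E := by
  intro e he e' he' hee'
  ext v
  by_cases hv : v ∈ H.V
  · rw [hβ v hv e he, hβ v hv e' he', hee']
  · exact iff_of_false (mt (H.edge_subset e he ·) hv) (mt (H.edge_subset e' he' ·) hv)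

theorem stmt4 {ι : Type} (H : Hypergraph' ι) (hrank : ∀ e ∈ H.E, e.card ≤ 2) :
    Nonempty (LineRep H) := by
  classical
  obtain ⟨t, ht⟩ := H.V.countable_toSet.exists_injOn_real
  choose! a b hab using fun e he => Finset.exists_eq_pair_of_card_le_two
    ((H.edge_nonempty e he).image t) (Finset.card_image_le.trans (hrank e he))
  let α (v : ι) : Pt := (t v, t v ^ 2)
  let β (e : Finset ι) : Set Pt := parabolaChord (a e) (b e)
  have incidence : ∀ v ∈ H.V, ∀ e ∈ H.E, (v ∈ e ↔ α v ∈ β e) := by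
    intro v hv e he
    calc v ∈ e ↔ t v ∈ e.image t := by
          rw [← Finset.mem_coe (s := e.image t), Finset.coe_image,
            ht.mem_image_iff (H.edge_subset e he) hv, Finset.mem_coe]
      _ ↔ t v = a e ∨ t v = b e := by rw [hab e he, Finset.mem_insert, Finset.mem_singleton]
      _ ↔ α v ∈ β e := mk_sq_mem_parabolaChord.symm
  exact ⟨⟨α, β, fun v hv v' hv' h => ht hv hv' (congrArg Prod.fst h), H.injOn_of_incidence incidence,
    fun e _ => isLine_parabolaChord _ _, incidence⟩⟩
end
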